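/- Let F = ℂ((t)) and let L ⊆ F^n be a lattice of rank r with entropy vector h (computed from a rank-r matrix A whose O_F-row span is L). Then for every subset J ⊊ [n] with h_J ≠ ∞ there exists x ∈ L such that: x_j = 0 for every j ∈ J; for every j ∉ J with h_{J∪{j}} ≠ ∞, val(x_j) = h_{J∪{j}} − h_J (in particular x_j ≠ 0); and x_j = 0 for every j ∉ J with h_{J∪{j}} = ∞. That is, the coordinatewise valuation of x equals the generator vector u_J defined by u_{J,j} = h_{J∪{j}} − h_J for j ∉ J and u_{J,j} = ∞ for j ∈ J. -/

import Mathlib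

open scoped Classical

noncomputable section

/-- The normalized valuation on formal Laurent series: the smallest exponent of the
support for a nonzero series, and `⊤` for the zero series. -/
def lval {k : Type} [Field k] (x : LaurentSeries k) : WithTop ℤ :=
  if x = 0 then ⊤ else (x.order : WithTop ℤ)

variable {k : Type} [Field k] {r n : ℕ}

/-- Membership in the `O_F`-row span of the matrix `A`, i.e. in the lattice
`L = O_F^r A`, where `O_F = k[[t]]` is the set of Laurent series of valuation `≥ 0`. -/
def inRowSpan (A : Matrix (Fin r) (Fin n) (LaurentSeries k))
    (x : Fin n → LaurentSeries k) : Prop :=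
  ∃ y : Fin r → LaurentSeries k, (∀ i, (0 : WithTop ℤ) ≤ lval (y i)) ∧
    ∀ j, x j = ∑ i, y i * A i j

/-- The tropicalization of the lattice `L = O_F^r A`: `v ∈ trop L` iff `v` is the
coordinatewise valuation of a point of `L` with all coordinates nonzero. -/
def tropMem (A : Matrix (Fin r) (Fin n) (LaurentSeries k)) (v : Fin n → ℤ) : Prop :=
  ∃ x : Fin n → LaurentSeries k, inRowSpan A x ∧
    ∀ j, x j ≠ 0 ∧ lval (x j) = (v j : WithTop ℤ)

/-- The entropy vector of the lattice `L = O_F^r A`: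
`h_J = min { val det A_{I × J} : I ⊆ [r], |I| = |J| }` (with `h_J = ⊤` when there is no
such `I` or all the determinants vanish). -/
def entropy (A : Matrix (Fin r) (Fin n) (LaurentSeries k)) (J : Finset (Fin n)) :
    WithTop ℤ :=
  (Finset.univ : Finset (Finset (Fin r))).inf fun I =>
    if h : I.card = J.card then
      lval (Matrix.det (Matrix.of fun a b : Fin J.card =>
        A (I.orderIsoOfFin h a).val (J.orderIsoOfFin rfl b).val))
    else ⊤

/-- The entropy polynomial `φ_L(v) = max { Σ_{j ∈ J} v_j - h_J : J ⊆ [n], h_J ≠ ∞ }`. -/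
def entPoly (A : Matrix (Fin r) (Fin n) (LaurentSeries k)) (v : Fin n → ℝ) : ℝ :=
  sSup {x : ℝ | ∃ J : Finset (Fin n), entropy A J ≠ ⊤ ∧
    x = ∑ j ∈ J, v j - ((WithTop.untopD 0 (entropy A J) : ℤ) : ℝ)}

/-- Membership in the support `|Σ_L|` of the polyhedral complex `Σ_L`: for every
coordinate `j` there is a set `J ∋ j` with `h_J ≠ ∞` whose monomial attains `φ_L(v)`. -/
def inSigma (A : Matrix (Fin r) (Fin n) (LaurentSeries k)) (v : Fin n → ℝ) : Prop :=
  ∀ j : Fin n, ∃ J : Finset (Fin n), j ∈ J ∧ entropy A J ≠ ⊤ ∧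
    entPoly A v = ∑ i ∈ J, v i - ((WithTop.untopD 0 (entropy A J) : ℤ) : ℝ)

namespace UJAux
variable {k : Type} [Field k]
open Matrix

lemma lval_zero : lval (0 : LaurentSeries k) = ⊤ := if_pos rfl

lemma lval_of_ne {x : LaurentSeries k} (h : x ≠ 0) : lval x = (x.order : WithTop ℤ) := if_neg h

lemma lval_eq_top_iff {x : LaurentSeries k} : lval x = ⊤ ↔ x = 0 := by
  constructor
  · intro h; by_contra hx; rw [lval_of_ne hx] at h; exact (WithTop.coe_ne_top h)
  · intro h; simp [h, lval_zero]

lemma lval_one : lval (1 : LaurentSeries k) = 0 := by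
  rw [lval_of_ne one_ne_zero, HahnSeries.order_one]; rfl

lemma lval_mul (x y : LaurentSeries k) : lval (x * y) = lval x + lval y := by
  by_cases hx : x = 0
  · simp [hx, lval_zero]
  by_cases hy : y = 0
  · simp [hy, lval_zero]
  rw [lval_of_ne hx, lval_of_ne hy, lval_of_ne (mul_ne_zero hx hy),
    HahnSeries.order_mul hx hy]
  push_cast; rfl

lemma lval_neg (x : LaurentSeries k) : lval (-x) = lval x := by
  by_cases hx : x = 0
  · simp [hx]
  · rw [lval_of_ne (neg_ne_zero.2 hx), lval_of_ne hx, HahnSeries.order_neg]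

lemma min_le_lval_add (x y : LaurentSeries k) : min (lval x) (lval y) ≤ lval (x + y) := by
  by_cases hx : x = 0
  · simp [hx, lval_zero]
  by_cases hy : y = 0
  · simp [hy, lval_zero]
  by_cases hxy : x + y = 0
  · simp [hxy, lval_zero]
  rw [lval_of_ne hx, lval_of_ne hy, lval_of_ne hxy]
  have := HahnSeries.min_order_le_order_add (x := x) (y := y) hxy
  rcases min_le_iff.1 this with h | h
  · exact min_le_of_left_le (by exact_mod_cast h)
  · exact min_le_of_right_le (by exact_mod_cast h)

lemma le_lval_add {c : WithTop ℤ} {x y : LaurentSeries k} (hx : c ≤ lval x)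
    (hy : c ≤ lval y) : c ≤ lval (x + y) :=
  le_trans (le_min hx hy) (min_le_lval_add x y)

lemma le_lval_sum {c : WithTop ℤ} {β : Type*} (S : Finset β) (f : β → LaurentSeries k)
    (h : ∀ a ∈ S, c ≤ lval (f a)) : c ≤ lval (∑ a ∈ S, f a) := by
  classical
  induction S using Finset.induction_on with
  | empty => simp [lval_zero]
  | @insert a S' hni ih =>
      rw [Finset.sum_insert hni]
      exact le_lval_add (h a (Finset.mem_insert_self _ _))
        (ih fun b hb => h b (Finset.mem_insert_of_mem hb))

lemma lval_le_of_coeff_ne {x : LaurentSeries k} {m : ℤ} (h : x.coeff m ≠ 0) :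
    lval x ≤ (m : WithTop ℤ) := by
  have hx : x ≠ 0 := fun h0 => h (by simp [h0])
  rw [lval_of_ne hx]
  exact_mod_cast HahnSeries.order_le_of_coeff_ne_zero h


lemma smul_eq_single_mul (c : k) (x : LaurentSeries k) :
    c • x = (HahnSeries.single (0 : ℤ) c) * x :=
  (HahnSeries.single_zero_mul_eq_smul).symm

lemma zero_le_lval_single (c : k) : (0 : WithTop ℤ) ≤ lval (HahnSeries.single (0 : ℤ) c) := by
  by_cases hc : c = 0
  · simp [hc, lval_zero]
  · rw [lval_of_ne (by simpa using hc), HahnSeries.order_single hc]; exact_mod_cast le_refl (0:ℤ)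

lemma lval_smul_eq (c : k) (hc : c ≠ 0) (x : LaurentSeries k) : lval (c • x) = lval x := by
  rw [smul_eq_single_mul, lval_mul, lval_of_ne (by simpa using hc),
    HahnSeries.order_single hc]
  simp

lemma le_lval_smul (c : k) (x : LaurentSeries k) : lval x ≤ lval (c • x) := by
  by_cases hc : c = 0
  · simp [hc, lval_zero]
  · rw [lval_smul_eq c hc]

/-- determinant valuation is invariant under arbitrary reindexing of rows and columns. -/
lemma lval_det_eq {p q : Type} [DecidableEq p] [Fintype p] [DecidableEq q] [Fintype q]
    (M : Matrix p p (LaurentSeries k)) (N : Matrix q q (LaurentSeries k)) (e f : p ≃ q)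
    (h : ∀ i j, M i j = N (e i) (f j)) : lval M.det = lval N.det := by
  have hM : M = (N.submatrix e e).submatrix (id : p → p) ((f.trans e.symm : Equiv.Perm p) : p → p) := by
    ext i j; simp [Matrix.submatrix_apply, h]
  have : M.det = Equiv.Perm.sign (f.trans e.symm : Equiv.Perm p) * N.det := by
    rw [hM, Matrix.det_permute', Matrix.det_submatrix_equiv_self]
  rw [this]
  rcases Int.units_eq_one_or (Equiv.Perm.sign (f.trans e.symm : Equiv.Perm p))
    with hs | hs <;> rw [hs]
  · simp
  · have h2 : ((((-1 : ℤˣ) : ℤ)) : LaurentSeries k) * N.det = - N.det := by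
      push_cast; ring
    rw [h2, lval_neg]

/-- an injective map into a finset of the right cardinality factors through the
order embedding enumeration. -/
lemma exists_equiv_enum {α β : Type*} [LinearOrder α] [Fintype β] [DecidableEq β]
    {K : Finset α} {m : ℕ} (hK : K.card = m)
    (u : β → α) (hu : Function.Injective u) (huK : ∀ b, u b ∈ K)
    (hcard : Fintype.card β = m) :
    ∃ e : β ≃ Fin m, ∀ b, K.orderEmbOfFin hK (e b) = u b := by
  have hv : Function.Bijective (fun b => (⟨u b, huK b⟩ : {x // x ∈ K})) := by
    rw [Fintype.bijective_iff_injective_and_card]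
    refine ⟨fun a b hab => hu (congrArg Subtype.val hab), ?_⟩
    rw [Fintype.card_coe, hK, hcard]
  refine ⟨(Equiv.ofBijective _ hv).trans (K.orderIsoOfFin hK).toEquiv.symm, fun b => ?_⟩
  have : K.orderIsoOfFin hK (((Equiv.ofBijective _ hv).trans
      (K.orderIsoOfFin hK).toEquiv.symm) b) = ⟨u b, huK b⟩ := by
    simp
  rw [← Finset.coe_orderIsoOfFin_apply, this]


/-- expansion of a determinant whose rows are linear combinations of a pool of rows. -/
lemma det_expand {m : ℕ} {ι : Type} [Fintype ι] [DecidableEq ι]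
    (u : Fin m → ι → LaurentSeries k) (v : ι → Fin m → LaurentSeries k)
    (W : Matrix (Fin m) (Fin m) (LaurentSeries k))
    (hW : ∀ a kk, W a kk = ∑ w : ι, u a w * v w kk) :
    W.det = ∑ φ : Fin m → ι, (∏ a, u a (φ a)) * (Matrix.of fun a kk => v (φ a) kk).det := by
  have hW' : W = fun a => ∑ w : ι, u a w • v w := by
    ext a kk; rw [hW]; simp [Finset.sum_apply]
  have := (Matrix.detRowAlternating (R := LaurentSeries k)
      (n := Fin m)).toMultilinearMap.map_sum (g := fun a w => u a w • v w)
  calc W.det = Matrix.detRowAlternating (fun a => ∑ w : ι, u a w • v w) := by rw [← hW']; rfl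
    _ = ∑ φ : Fin m → ι, Matrix.detRowAlternating (fun a => u a (φ a) • v (φ a)) := this
    _ = _ := by
        refine Finset.sum_congr rfl fun φ _ => ?_
        have : (Matrix.detRowAlternating (R := LaurentSeries k)
            (fun a => u a (φ a) • v (φ a)))
            = Matrix.det (Matrix.of fun a kk => u a (φ a) * v (φ a) kk) := rfl
        rw [this]
        exact Matrix.det_mul_column (fun a => u a (φ a)) (Matrix.of fun a kk => v (φ a) kk)



lemma coeff_sum {β : Type*} (S : Finset β) (f : β → LaurentSeries k) (m : ℤ) :
    (∑ a ∈ S, f a).coeff m = ∑ a ∈ S, (f a).coeff m := by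
  classical
  induction S using Finset.induction_on with
  | empty => simp
  | @insert a S' hni ih =>
      rw [Finset.sum_insert hni, Finset.sum_insert hni, HahnSeries.coeff_add, ih]

lemma generic {β ι' : Type} [DecidableEq β] (S : Finset β) (T : Finset ι') (c : β → ι' → ℂ)
    (hc : ∀ j ∈ S, ∃ i ∈ T, c j i ≠ 0) :
    ∃ lam : ι' → ℂ, ∀ j ∈ S, ∑ i ∈ T, lam i * c j i ≠ 0 := by
  classical
  induction S using Finset.induction_on with
  | empty => exact ⟨0, by simp⟩
  | @insert j0 S' hni ih =>
      obtain ⟨lam, hlam⟩ := ih (fun j hj => hc j (Finset.mem_insert_of_mem hj))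
      obtain ⟨i1, hi1T, hi1⟩ := hc j0 (Finset.mem_insert_self _ _)
      set mu : ι' → ℂ := Pi.single i1 1 with hmu
      have hmusum : ∑ i ∈ T, mu i * c j0 i = c j0 i1 := by
        rw [Finset.sum_eq_single_of_mem i1 hi1T]
        · simp [hmu]
        · intro b _ hne
          simp [hmu, Pi.single_apply, hne]
      obtain ⟨t, ht⟩ := Infinite.exists_notMem_finset
        ((insert j0 S').image fun j =>
          -(∑ i ∈ T, lam i * c j i) / (∑ i ∈ T, mu i * c j i))
      refine ⟨fun i => lam i + t * mu i, fun j hj => ?_⟩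
      have hexp : ∑ i ∈ T, (lam i + t * mu i) * c j i
          = (∑ i ∈ T, lam i * c j i) + t * (∑ i ∈ T, mu i * c j i) := by
        rw [Finset.mul_sum, ← Finset.sum_add_distrib]
        exact Finset.sum_congr rfl fun i _ => by ring
      rw [hexp]
      intro hcon
      by_cases hMuj : (∑ i ∈ T, mu i * c j i) = 0
      · rcases Finset.mem_insert.1 hj with rfl | hj'
        · rw [hmusum] at hMuj
          exact hi1 hMuj
        · rw [hMuj, mul_zero, add_zero] at hcon
          exact hlam j hj' hcon
      · apply ht
        refine Finset.mem_image.2 ⟨j, hj, ?_⟩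
        rw [eq_comm, eq_div_iff hMuj]
        linear_combination hcon


variable {r n : ℕ}

def mnr (A : Matrix (Fin r) (Fin n) (LaurentSeries k)) (I : Finset (Fin r))
    (K : Finset (Fin n)) (h : I.card = K.card) :
    Matrix (Fin K.card) (Fin K.card) (LaurentSeries k) :=
  Matrix.of fun a b => A (I.orderEmbOfFin h a) (K.orderEmbOfFin rfl b)

lemma entmat_eq (A : Matrix (Fin r) (Fin n) (LaurentSeries k)) (I : Finset (Fin r))
    (K : Finset (Fin n)) (h : I.card = K.card) :
    (Matrix.of fun a b : Fin K.card =>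
      A (I.orderIsoOfFin h a).val (K.orderIsoOfFin rfl b).val) = mnr A I K h := by
  ext a b
  simp only [mnr, Matrix.of_apply, Finset.coe_orderIsoOfFin_apply]

lemma entropy_le (A : Matrix (Fin r) (Fin n) (LaurentSeries k)) {I : Finset (Fin r)}
    {K : Finset (Fin n)} (h : I.card = K.card) :
    entropy A K ≤ lval (mnr A I K h).det := by
  refine le_trans (Finset.inf_le (Finset.mem_univ I)) (le_of_eq ?_)
  show (if h' : I.card = K.card then
      lval (Matrix.det (Matrix.of fun a b : Fin K.card =>
        A (I.orderIsoOfFin h' a).val (K.orderIsoOfFin rfl b).val))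
    else ⊤) = _
  rw [dif_pos h, entmat_eq]

lemma entropy_attain (A : Matrix (Fin r) (Fin n) (LaurentSeries k)) {K : Finset (Fin n)}
    (hK : entropy A K ≠ ⊤) :
    ∃ (I : Finset (Fin r)) (h : I.card = K.card), entropy A K = lval (mnr A I K h).det := by
  obtain ⟨I, -, hI⟩ := Finset.exists_mem_eq_inf (Finset.univ : Finset (Finset (Fin r)))
    Finset.univ_nonempty (fun I' : Finset (Fin r) =>
      if h' : I'.card = K.card then
        lval (Matrix.det (Matrix.of fun a b : Fin K.card =>
          A (I'.orderIsoOfFin h' a).val (K.orderIsoOfFin rfl b).val))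
      else ⊤)
  have hI' : entropy A K = if h' : I.card = K.card then
      lval (Matrix.det (Matrix.of fun a b : Fin K.card =>
        A (I.orderIsoOfFin h' a).val (K.orderIsoOfFin rfl b).val))
    else ⊤ := hI
  by_cases h : I.card = K.card
  · refine ⟨I, h, ?_⟩
    rw [hI', dif_pos h, entmat_eq]
  · rw [hI', dif_neg h] at hK; exact absurd rfl hK


lemma zero_le_lval_prod {β : Type*} (S : Finset β) (f : β → LaurentSeries k)
    (h : ∀ a ∈ S, (0 : WithTop ℤ) ≤ lval (f a)) : (0 : WithTop ℤ) ≤ lval (∏ a ∈ S, f a) := by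
  classical
  induction S using Finset.induction_on with
  | empty => simp [lval_one]
  | @insert a S' hni ih =>
      rw [Finset.prod_insert hni, lval_mul]
      exact add_nonneg (h a (Finset.mem_insert_self _ _))
        (ih fun b hb => h b (Finset.mem_insert_of_mem hb))

-- ### Section 4: the construction
section Construction
variable (A : Matrix (Fin r) (Fin n) (LaurentSeries k)) (I : Finset (Fin r))
  (J : Finset (Fin n)) (hIJ : I.card = J.card)

/-- coefficients expressing row `i` on the `J` columns in terms of the rows of `I`. -/
def cvec (i : Fin r) : Fin J.card → LaurentSeries k :=
  Ring.inverse (mnr A I J hIJ).det •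
    Matrix.cramer (mnr A I J hIJ)ᵀ (fun b => A i (J.orderEmbOfFin rfl b))

/-- row `i` minus the `cvec`-combination of the rows of `I`; vanishes on the `J` columns. -/
def xv (i : Fin r) : Fin n → LaurentSeries k := fun j =>
  A i j - ∑ b, cvec A I J hIJ i b * A (I.orderEmbOfFin hIJ b) j

variable {A I J}

lemma d_mul_cvec (hd : (mnr A I J hIJ).det ≠ 0) (i : Fin r) (b : Fin J.card) :
    (mnr A I J hIJ).det * cvec A I J hIJ i b =
      ((mnr A I J hIJ).updateRow b (fun b' => A i (J.orderEmbOfFin rfl b'))).det := by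
  have h1 : (mnr A I J hIJ).det * Ring.inverse (mnr A I J hIJ).det = 1 :=
    Ring.mul_inverse_cancel _ (isUnit_iff_ne_zero.2 hd)
  show (mnr A I J hIJ).det * (Ring.inverse (mnr A I J hIJ).det •
      Matrix.cramer (mnr A I J hIJ)ᵀ (fun b' => A i (J.orderEmbOfFin rfl b')) b) = _
  rw [smul_eq_mul, ← mul_assoc, h1, one_mul, Matrix.cramer_transpose_apply]

lemma cvec_eq_vecMul_inv (i : Fin r) :
    cvec A I J hIJ i = Matrix.vecMul (fun b => A i (J.orderEmbOfFin rfl b)) (mnr A I J hIJ)⁻¹ := by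
  unfold cvec
  rw [Matrix.cramer_eq_adjugate_mulVec, Matrix.inv_def, ← Matrix.adjugate_transpose]
  funext b
  simp only [Matrix.vecMul, Matrix.mulVec, dotProduct, Pi.smul_apply, smul_eq_mul,
    Matrix.smul_apply, Matrix.transpose_apply, Finset.mul_sum]
  exact Finset.sum_congr rfl fun c _ => by ring

lemma vecMul_cvec (hd : (mnr A I J hIJ).det ≠ 0) (i : Fin r) :
    Matrix.vecMul (cvec A I J hIJ i) (mnr A I J hIJ) = fun b => A i (J.orderEmbOfFin rfl b) := by
  rw [cvec_eq_vecMul_inv hIJ i, Matrix.vecMul_vecMul,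
    Matrix.nonsing_inv_mul _ (isUnit_iff_ne_zero.2 hd), Matrix.vecMul_one]

/-- S1 : `xv i` vanishes on the columns in `J`. -/
lemma xv_eq_zero_on (hd : (mnr A I J hIJ).det ≠ 0) (i : Fin r) {j : Fin n} (hj : j ∈ J) : xv A I J hIJ i j = 0 := by
  obtain ⟨b0, hb0⟩ : ∃ b0, J.orderEmbOfFin rfl b0 = j := by
    have := Finset.range_orderEmbOfFin J (rfl : J.card = J.card)
    exact Set.mem_range.1 (by rw [this]; exact hj)
  have hsum : ∑ b, cvec A I J hIJ i b * A (I.orderEmbOfFin hIJ b) j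
      = Matrix.vecMul (cvec A I J hIJ i) (mnr A I J hIJ) b0 := by
    simp only [Matrix.vecMul, dotProduct, mnr, Matrix.of_apply, hb0]
  rw [xv, hsum, vecMul_cvec hIJ hd]
  show A i j - A i (J.orderEmbOfFin rfl b0) = 0
  rw [hb0, sub_self]

/-- S4 : `xv i = 0` for `i ∈ I`. -/
lemma xv_eq_zero_mem (hd : (mnr A I J hIJ).det ≠ 0) {i : Fin r} (hi : i ∈ I) : xv A I J hIJ i = 0 := by
  obtain ⟨b0, hb0⟩ : ∃ b0, I.orderEmbOfFin hIJ b0 = i := by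
    have := Finset.range_orderEmbOfFin I hIJ
    exact Set.mem_range.1 (by rw [this]; exact hi)
  have hv : (fun b' => A i (J.orderEmbOfFin rfl b')) = mnr A I J hIJ b0 := by
    funext b'; rw [← hb0]; rfl
  have hcv : cvec A I J hIJ i = Ring.inverse (mnr A I J hIJ).det •
      (Pi.single b0 (mnr A I J hIJ).det : Fin J.card → LaurentSeries k) := by
    unfold cvec
    rw [hv, Matrix.cramer_transpose_row_self]
  funext j
  rw [xv, hcv]
  have hsum : ∑ b, (Ring.inverse (mnr A I J hIJ).det •
        (Pi.single b0 (mnr A I J hIJ).det : Fin J.card → LaurentSeries k)) b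
        * A (I.orderEmbOfFin hIJ b) j
      = (Ring.inverse (mnr A I J hIJ).det * (mnr A I J hIJ).det) * A (I.orderEmbOfFin hIJ b0) j := by
    rw [Finset.sum_eq_single b0]
    · simp
    · intro b _ hb
      simp [Pi.single_apply, hb]
    · simp
  rw [hsum, Ring.inverse_mul_cancel _ (isUnit_iff_ne_zero.2 hd), one_mul, hb0]
  exact sub_self _

/-- S2 : the coefficients are integral. -/
lemma zero_le_lval_cvec (hd : (mnr A I J hIJ).det ≠ 0)
    (hmin : ∀ (I' : Finset (Fin r)) (h' : I'.card = J.card),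
      lval (mnr A I J hIJ).det ≤ lval (mnr A I' J h').det)
    (i : Fin r) (b : Fin J.card) : (0 : WithTop ℤ) ≤ lval (cvec A I J hIJ i b) := by
  have key : lval (mnr A I J hIJ).det ≤
      lval (((mnr A I J hIJ).updateRow b (fun b' => A i (J.orderEmbOfFin rfl b'))).det) := by
    by_cases hi : i ∈ I
    · obtain ⟨b0, hb0⟩ : ∃ b0, I.orderEmbOfFin hIJ b0 = i := by
        have := Finset.range_orderEmbOfFin I hIJ
        exact Set.mem_range.1 (by rw [this]; exact hi)
      have hv : (fun b' => A i (J.orderEmbOfFin rfl b')) = mnr A I J hIJ b0 := by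
        funext b'; rw [← hb0]; rfl
      rw [hv]
      by_cases hb : b0 = b
      · rw [hb, Matrix.updateRow_eq_self]
      · have : ((mnr A I J hIJ).updateRow b (mnr A I J hIJ b0)).det = 0 := by
          refine Matrix.det_zero_of_row_eq (Ne.symm hb) ?_
          rw [Matrix.updateRow_self, Matrix.updateRow_ne hb]
        rw [this, lval_zero]
        exact le_top
    · set I₂ : Finset (Fin r) := insert i (I.erase (I.orderEmbOfFin hIJ b)) with hI₂
      have hpos : 0 < I.card := by rw [hIJ]; exact b.pos
      have hcard2 : I₂.card = J.card := by
        rw [hI₂, Finset.card_insert_of_notMem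
          (fun h => hi (Finset.mem_of_mem_erase h)),
          Finset.card_erase_of_mem (Finset.orderEmbOfFin_mem I hIJ b)]
        omega
      set u : Fin J.card → Fin r := fun a => if a = b then i else I.orderEmbOfFin hIJ a with hu_def
      have hu : Function.Injective u := by
        intro a1 a2 h
        simp only [hu_def] at h
        by_cases h1 : a1 = b <;> by_cases h2 : a2 = b
        · rw [h1, h2]
        · rw [if_pos h1, if_neg h2] at h
          exact absurd (h ▸ Finset.orderEmbOfFin_mem I hIJ a2) hi
        · rw [if_neg h1, if_pos h2] at h
          exact absurd (h ▸ Finset.orderEmbOfFin_mem I hIJ a1) (by rw [← h] at hi ⊢; exact hi)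
        · rw [if_neg h1, if_neg h2] at h
          exact (I.orderEmbOfFin hIJ).injective h
      have huK : ∀ a, u a ∈ I₂ := by
        intro a
        by_cases h1 : a = b
        · simp only [hu_def, if_pos h1, hI₂]; exact Finset.mem_insert_self _ _
        · simp only [hu_def, if_neg h1, hI₂]
          refine Finset.mem_insert_of_mem (Finset.mem_erase.2 ⟨?_, Finset.orderEmbOfFin_mem I hIJ a⟩)
          exact fun hcon => h1 ((I.orderEmbOfFin hIJ).injective hcon)
      obtain ⟨e, he⟩ := exists_equiv_enum hcard2 u hu huK (Fintype.card_fin _)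
      have hld := lval_det_eq ((mnr A I J hIJ).updateRow b (fun b' => A i (J.orderEmbOfFin rfl b')))
        (mnr A I₂ J hcard2) e (Equiv.refl _) ?_
      · rw [hld]; exact hmin I₂ hcard2
      · intro a b'
        by_cases h1 : a = b
        · rw [h1, Matrix.updateRow_self]
          have : u b = i := by rw [hu_def]; simp
          show A i (J.orderEmbOfFin rfl b') = A (I₂.orderEmbOfFin hcard2 (e b)) (J.orderEmbOfFin rfl b')
          rw [he b, this]
        · rw [Matrix.updateRow_ne h1]
          show A (I.orderEmbOfFin hIJ a) _ = A (I₂.orderEmbOfFin hcard2 (e a)) _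
          rw [he a, hu_def]
          simp [h1]
  have hdne : lval (mnr A I J hIJ).det ≠ ⊤ := fun h => hd (lval_eq_top_iff.1 h)
  have h2 : lval (mnr A I J hIJ).det + lval (cvec A I J hIJ i b) =
      lval (((mnr A I J hIJ).updateRow b (fun b' => A i (J.orderEmbOfFin rfl b'))).det) := by
    rw [← lval_mul, d_mul_cvec hIJ hd i b]
  have h3 : lval (mnr A I J hIJ).det + 0 ≤
      lval (mnr A I J hIJ).det + lval (cvec A I J hIJ i b) := by
    rw [add_zero, h2]; exact key
  exact (WithTop.add_le_add_iff_left hdne).1 h3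

/-- S3 : Schur complement formula for the bordered minor. -/
lemma lval_bordered (hd : (mnr A I J hIJ).det ≠ 0) {i : Fin r} (hi : i ∉ I) {j : Fin n}
    (hj : j ∉ J) (hc : (insert i I).card = (insert j J).card) :
    lval (mnr A (insert i I) (insert j J) hc).det =
      lval (mnr A I J hIJ).det + lval (xv A I J hIJ i j) := by
  haveI : Invertible (mnr A I J hIJ) :=
    (mnr A I J hIJ).invertibleOfIsUnitDet (isUnit_iff_ne_zero.2 hd)
  have hcard : Fintype.card (Fin J.card ⊕ Fin 1) = (insert j J).card := by
    rw [Fintype.card_sum, Fintype.card_fin, Fintype.card_fin,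
      Finset.card_insert_of_notMem hj]
  have rinj : Function.Injective (Sum.elim (I.orderEmbOfFin hIJ) (fun _ : Fin 1 => i)) := by
    intro z w h
    rcases z with b | z <;> rcases w with b' | w <;>
      simp only [Sum.elim_inl, Sum.elim_inr] at h
    · exact congrArg Sum.inl ((I.orderEmbOfFin hIJ).injective h)
    · exact absurd (h ▸ Finset.orderEmbOfFin_mem I hIJ b) hi
    · exact absurd (h ▸ Finset.orderEmbOfFin_mem I hIJ b') (by simpa using hi)
    · exact congrArg Sum.inr (Subsingleton.elim z w)
  have rmem : ∀ z, Sum.elim (I.orderEmbOfFin hIJ) (fun _ : Fin 1 => i) z ∈ insert i I := by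
    intro z; rcases z with b | z
    · exact Finset.mem_insert_of_mem (Finset.orderEmbOfFin_mem I hIJ b)
    · exact Finset.mem_insert_self _ _
  have cinj : Function.Injective (Sum.elim (J.orderEmbOfFin rfl) (fun _ : Fin 1 => j)) := by
    intro z w h
    rcases z with b | z <;> rcases w with b' | w <;>
      simp only [Sum.elim_inl, Sum.elim_inr] at h
    · exact congrArg Sum.inl ((J.orderEmbOfFin rfl).injective h)
    · exact absurd (h ▸ Finset.orderEmbOfFin_mem J rfl b) hj
    · exact absurd (h ▸ Finset.orderEmbOfFin_mem J rfl b') (by simpa using hj)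
    · exact congrArg Sum.inr (Subsingleton.elim z w)
  have cmem : ∀ z, Sum.elim (J.orderEmbOfFin rfl) (fun _ : Fin 1 => j) z ∈ insert j J := by
    intro z; rcases z with b | z
    · exact Finset.mem_insert_of_mem (Finset.orderEmbOfFin_mem J rfl b)
    · exact Finset.mem_insert_self _ _
  obtain ⟨e, he⟩ := exists_equiv_enum hc _ rinj rmem hcard
  obtain ⟨f, hf⟩ := exists_equiv_enum (rfl : (insert j J).card = (insert j J).card)
    _ cinj cmem hcard
  have hld := lval_det_eq
    (Matrix.fromBlocks (mnr A I J hIJ)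
      (Matrix.of fun b (_ : Fin 1) => A (I.orderEmbOfFin hIJ b) j)
      (Matrix.of fun (_ : Fin 1) b => A i (J.orderEmbOfFin rfl b))
      (Matrix.of fun (_ : Fin 1) (_ : Fin 1) => A i j))
    (mnr A (insert i I) (insert j J) hc) e f ?_
  · rw [← hld, Matrix.det_fromBlocks₁₁, lval_mul]
    congr 1
    have hcb : ∀ b, (Matrix.of (fun (_ : Fin 1) b => A i (J.orderEmbOfFin rfl b)) *
        (mnr A I J hIJ)⁻¹) 0 b = cvec A I J hIJ i b := by
      intro b
      rw [cvec_eq_vecMul_inv hIJ i]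
      simp [Matrix.mul_apply, Matrix.vecMul, dotProduct]
    have hdet : (Matrix.of (fun (_ : Fin 1) (_ : Fin 1) => A i j) -
        Matrix.of (fun (_ : Fin 1) b => A i (J.orderEmbOfFin rfl b)) * (mnr A I J hIJ)⁻¹ *
        Matrix.of (fun b (_ : Fin 1) => A (I.orderEmbOfFin hIJ b) j)).det
        = xv A I J hIJ i j := by
      rw [Matrix.det_fin_one, Matrix.sub_apply, Matrix.mul_apply]
      unfold xv
      congr 1
      refine Finset.sum_congr rfl fun b _ => ?_
      rw [hcb b]
      rfl
    rw [Matrix.invOf_eq_nonsing_inv, hdet]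
  · intro z w
    show _ = A ((insert i I).orderEmbOfFin hc (e z)) ((insert j J).orderEmbOfFin rfl (f w))
    rw [he z, hf w]
    rcases z with b | z <;> rcases w with b' | w <;> rfl

/-- S5 : lower bound for an arbitrary minor on the columns `insert j J`. -/
lemma le_lval_minor (hmin : ∀ (I' : Finset (Fin r)) (h' : I'.card = J.card),
      lval (mnr A I J hIJ).det ≤ lval (mnr A I' J h').det)
    (hd : (mnr A I J hIJ).det ≠ 0)
    {j : Fin n} (hj : j ∉ J) (I' : Finset (Fin r)) (h' : I'.card = (insert j J).card) :
    lval (mnr A I J hIJ).det + (Iᶜ.inf fun i => lval (xv A I J hIJ i j)) ≤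
      lval (mnr A I' (insert j J) h').det := by
  classical
  have hcard : Fintype.card (Fin J.card ⊕ Fin 1) = (insert j J).card := by
    rw [Fintype.card_sum, Fintype.card_fin, Fintype.card_fin,
      Finset.card_insert_of_notMem hj]
  obtain ⟨p, hp⟩ : ∃ p, (insert j J).orderEmbOfFin rfl p = j :=
    Set.mem_range.1 (by rw [Finset.range_orderEmbOfFin]; exact Finset.mem_insert_self _ _)
  set ρ : Fin (insert j J).card → Fin r := fun a => I'.orderEmbOfFin h' a with hρ
  set κ : Fin (insert j J).card → Fin n := fun a => (insert j J).orderEmbOfFin rfl a with hκ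
  set v : (Fin J.card ⊕ Fin 1) → Fin (insert j J).card → LaurentSeries k :=
    Sum.elim (fun b kk => A (I.orderEmbOfFin hIJ b) (κ kk))
      (fun _ kk => if kk = p then 1 else 0) with hv
  set u : Fin (insert j J).card → (Fin J.card ⊕ Fin 1) → LaurentSeries k :=
    fun a => Sum.elim (fun b => cvec A I J hIJ (ρ a) b) (fun _ => xv A I J hIJ (ρ a) j) with hu
  have hW : ∀ a kk, mnr A I' (insert j J) h' a kk = ∑ w, u a w * v w kk := by
    intro a kk
    rw [Fintype.sum_sum_type, Fin.sum_univ_one]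
    have hxv : xv A I J hIJ (ρ a) j * (if kk = p then 1 else 0)
        = xv A I J hIJ (ρ a) (κ kk) := by
      by_cases hkp : kk = p
      · rw [if_pos hkp, mul_one, hkp]
        show xv A I J hIJ (ρ a) j = xv A I J hIJ (ρ a) ((insert j J).orderEmbOfFin rfl p)
        rw [hp]
      · rw [if_neg hkp, mul_zero]
        refine (xv_eq_zero_on hIJ hd _ ?_).symm
        have h1 : κ kk ∈ insert j J := Finset.orderEmbOfFin_mem _ rfl kk
        have h2 : κ kk ≠ j := by
          intro hcon
          refine hkp (((insert j J).orderEmbOfFin rfl).injective ?_)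
          show (insert j J).orderEmbOfFin rfl kk = (insert j J).orderEmbOfFin rfl p
          rw [hp]
          exact hcon
        rcases Finset.mem_insert.1 h1 with h3 | h3
        · exact absurd h3 h2
        · exact h3
    show A (ρ a) (κ kk) = _
    simp only [hu, hv, Sum.elim_inl, Sum.elim_inr]
    rw [hxv]
    show A (ρ a) (κ kk) = (∑ b, cvec A I J hIJ (ρ a) b * A (I.orderEmbOfFin hIJ b) (κ kk))
      + (A (ρ a) (κ kk) - ∑ b, cvec A I J hIJ (ρ a) b * A (I.orderEmbOfFin hIJ b) (κ kk))
    ring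
  rw [det_expand u v (mnr A I' (insert j J) h') hW]
  refine le_lval_sum _ _ (fun φ _ => ?_)
  by_cases hφ : Function.Injective φ
  · have hbij : Function.Bijective φ :=
      (Fintype.bijective_iff_injective_and_card φ).2 ⟨hφ, by rw [Fintype.card_fin, hcard]⟩
    set eb := Equiv.ofBijective φ hbij with heb
    set astar := eb.symm (Sum.inr 0) with hastar
    have hφa : φ astar = Sum.inr 0 := eb.apply_symm_apply (Sum.inr 0)
    by_cases hrho : ρ astar ∈ I
    · have h0 : u astar (φ astar) = 0 := by
        rw [hφa]
        show xv A I J hIJ (ρ astar) j = 0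
        rw [xv_eq_zero_mem hIJ hd hrho]
        rfl
      have hprod0 : (∏ a, u a (φ a)) = 0 :=
        Finset.prod_eq_zero (Finset.mem_univ astar) h0
      rw [hprod0, zero_mul, lval_zero]
      exact le_top
    · -- the product part
      have hrest : (0 : WithTop ℤ) ≤ lval (∏ a ∈ Finset.univ.erase astar, u a (φ a)) := by
        refine zero_le_lval_prod _ _ (fun a ha => ?_)
        rcases hfa : φ a with b | z
        · rw [hu]
          simp only [Sum.elim_inl]
          exact zero_le_lval_cvec hIJ hd hmin (ρ a) b
        · exfalso
          have hz : z = 0 := Subsingleton.elim _ _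
          rw [hz] at hfa
          exact (Finset.mem_erase.1 ha).1 (hφ (hfa.trans hφa.symm))
      have hprod : lval (xv A I J hIJ (ρ astar) j) ≤ lval (∏ a, u a (φ a)) := by
        rw [← Finset.mul_prod_erase _ _ (Finset.mem_univ astar), lval_mul, hφa]
        have h1 : u astar (Sum.inr 0) = xv A I J hIJ (ρ astar) j := rfl
        rw [h1]
        calc lval (xv A I J hIJ (ρ astar) j)
            = lval (xv A I J hIJ (ρ astar) j) + 0 := (add_zero _).symm
          _ ≤ _ := add_le_add_right hrest _
      -- the determinant part
      have cinj : Function.Injective (Sum.elim (J.orderEmbOfFin rfl) (fun _ : Fin 1 => j)) := by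
        intro z w hzw
        rcases z with b | z <;> rcases w with b' | w <;>
          simp only [Sum.elim_inl, Sum.elim_inr] at hzw
        · exact congrArg Sum.inl ((J.orderEmbOfFin rfl).injective hzw)
        · exact absurd (hzw ▸ Finset.orderEmbOfFin_mem J rfl b) hj
        · exact absurd (hzw ▸ Finset.orderEmbOfFin_mem J rfl b') (by simpa using hj)
        · exact congrArg Sum.inr (Subsingleton.elim z w)
      have cmem : ∀ z, Sum.elim (J.orderEmbOfFin rfl) (fun _ : Fin 1 => j) z ∈ insert j J := by
        intro z; rcases z with b | z
        · exact Finset.mem_insert_of_mem (Finset.orderEmbOfFin_mem J rfl b)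
        · exact Finset.mem_insert_self _ _
      obtain ⟨g, hg⟩ := exists_equiv_enum (rfl : (insert j J).card = (insert j J).card)
        _ cinj cmem hcard
      have h1 : lval (Matrix.of fun a kk => v (φ a) kk).det
          = lval (Matrix.of fun (z w : Fin J.card ⊕ Fin 1) => v z (g w)).det := by
        refine lval_det_eq _ _ eb g.symm (fun a kk => ?_)
        show v (φ a) kk = v (eb a) (g (g.symm kk))
        rw [g.apply_symm_apply]
        rfl
      have h2 : (Matrix.of fun (z w : Fin J.card ⊕ Fin 1) => v z (g w))
          = Matrix.fromBlocks (mnr A I J hIJ)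
              (Matrix.of fun b (_ : Fin 1) => A (I.orderEmbOfFin hIJ b) j) 0 1 := by
        funext z w
        rcases z with b | z <;> rcases w with b' | w
        · show A (I.orderEmbOfFin hIJ b) (κ (g (Sum.inl b'))) = mnr A I J hIJ b b'
          have hx : κ (g (Sum.inl b')) = J.orderEmbOfFin rfl b' := hg (Sum.inl b')
          rw [hx]
          rfl
        · show A (I.orderEmbOfFin hIJ b) (κ (g (Sum.inr w))) = A (I.orderEmbOfFin hIJ b) j
          have hx : κ (g (Sum.inr w)) = j := hg (Sum.inr w)
          rw [hx]
        · show (if g (Sum.inl b') = p then (1 : LaurentSeries k) else 0) = 0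
          rw [if_neg]
          intro hcon
          have : (insert j J).orderEmbOfFin rfl (g (Sum.inl b')) = j := by rw [hcon, hp]
          rw [hg (Sum.inl b')] at this
          exact hj (this ▸ Finset.orderEmbOfFin_mem J rfl b')
        · show (if g (Sum.inr w) = p then (1 : LaurentSeries k) else 0)
            = (1 : Matrix (Fin 1) (Fin 1) (LaurentSeries k)) z w
          rw [if_pos, Subsingleton.elim z w, Matrix.one_apply_eq]
          refine ((insert j J).orderEmbOfFin rfl).injective ?_
          rw [hg (Sum.inr w), hp]
          rfl
      have hdetpart : lval (Matrix.of fun a kk => v (φ a) kk).det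
          = lval (mnr A I J hIJ).det := by
        rw [h1, h2, Matrix.det_fromBlocks_zero₂₁, Matrix.det_one, mul_one]
      rw [lval_mul, hdetpart]
      have hinf : (Iᶜ.inf fun i => lval (xv A I J hIJ i j)) ≤ lval (∏ a, u a (φ a)) :=
        le_trans (Finset.inf_le (Finset.mem_compl.2 hrho)) hprod
      calc lval (mnr A I J hIJ).det + (Iᶜ.inf fun i => lval (xv A I J hIJ i j))
          ≤ lval (mnr A I J hIJ).det + lval (∏ a, u a (φ a)) := add_le_add_right hinf _
        _ = lval (∏ a, u a (φ a)) + lval (mnr A I J hIJ).det := add_comm _ _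
  · obtain ⟨a1, a2, hfa, hne⟩ := Function.not_injective_iff.1 hφ
    have hrow : (Matrix.of fun a kk => v (φ a) kk).det = 0 :=
      Matrix.det_zero_of_row_eq hne (funext fun kk => by
        show v (φ a1) kk = v (φ a2) kk; rw [hfa])
    rw [hrow, mul_zero, lval_zero]
    exact le_top

/-- S6 : `xv i` lies in the lattice. -/
lemma xv_inRowSpan (hd : (mnr A I J hIJ).det ≠ 0)
    (hmin : ∀ (I' : Finset (Fin r)) (h' : I'.card = J.card),
      lval (mnr A I J hIJ).det ≤ lval (mnr A I' J h').det)
    {i : Fin r} (hi : i ∉ I) :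
    ∃ y : Fin r → LaurentSeries k, (∀ i', (0 : WithTop ℤ) ≤ lval (y i')) ∧
      ∀ j, xv A I J hIJ i j = ∑ i', y i' * A i' j := by
  classical
  set y : Fin r → LaurentSeries k := fun i' =>
    if i' = i then 1 else
      (if h : i' ∈ I then -(cvec A I J hIJ i ((I.orderIsoOfFin hIJ).symm ⟨i', h⟩)) else 0)
    with hy
  have hyi : y i = 1 := by rw [hy]; simp
  have hyI : ∀ (b : Fin J.card), y (I.orderEmbOfFin hIJ b) = -(cvec A I J hIJ i b) := by
    intro b
    have hmem : I.orderEmbOfFin hIJ b ∈ I := Finset.orderEmbOfFin_mem I hIJ b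
    have hne : I.orderEmbOfFin hIJ b ≠ i := fun hcon => hi (hcon ▸ hmem)
    rw [hy]
    simp only [if_neg hne, dif_pos hmem]
    congr 1
    have : (⟨I.orderEmbOfFin hIJ b, hmem⟩ : {x // x ∈ I}) = I.orderIsoOfFin hIJ b := by
      ext
      rw [Finset.coe_orderIsoOfFin_apply]
    rw [this, OrderIso.symm_apply_apply]
  have hy0 : ∀ i', i' ≠ i → i' ∉ I → y i' = 0 := by
    intro i' h1 h2
    rw [hy]
    simp only [if_neg h1, dif_neg h2]
  refine ⟨y, ?_, ?_⟩
  · intro i'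
    by_cases h1 : i' = i
    · rw [h1, hyi]
      exact le_of_eq lval_one.symm
    by_cases h2 : i' ∈ I
    · obtain ⟨b, hb⟩ : ∃ b, I.orderEmbOfFin hIJ b = i' :=
        Set.mem_range.1 (by rw [Finset.range_orderEmbOfFin]; exact h2)
      rw [← hb, hyI b, lval_neg]
      exact zero_le_lval_cvec hIJ hd hmin i b
    · rw [hy0 i' h1 h2, lval_zero]
      exact le_top
  · intro j
    have hsplit : ∑ i', y i' * A i' j
        = y i * A i j + ∑ i' ∈ Finset.univ.erase i, y i' * A i' j :=
      (Finset.add_sum_erase _ _ (Finset.mem_univ i)).symm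
    have hIsub : I ⊆ Finset.univ.erase i := fun i' h =>
      Finset.mem_erase.2 ⟨fun hcon => hi (hcon ▸ h), Finset.mem_univ _⟩
    have herase : ∑ i' ∈ Finset.univ.erase i, y i' * A i' j = ∑ i' ∈ I, y i' * A i' j :=
      (Finset.sum_subset hIsub (fun i' _ hni =>
        by rw [hy0 i' (Finset.mem_erase.1 ‹i' ∈ Finset.univ.erase i›).1 hni, zero_mul])).symm
    have hbij : ∑ b : Fin J.card, y (I.orderEmbOfFin hIJ b) * A (I.orderEmbOfFin hIJ b) j
        = ∑ i' ∈ I, y i' * A i' j := by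
      refine Finset.sum_bij (fun b _ => I.orderEmbOfFin hIJ b)
        (fun b _ => Finset.orderEmbOfFin_mem I hIJ b)
        (fun b1 _ b2 _ h => (I.orderEmbOfFin hIJ).injective h)
        (fun i' h => ?_) (fun b _ => rfl)
      obtain ⟨b, hb⟩ : ∃ b, I.orderEmbOfFin hIJ b = i' :=
        Set.mem_range.1 (by rw [Finset.range_orderEmbOfFin]; exact h)
      exact ⟨b, Finset.mem_univ b, hb⟩
    rw [hsplit, herase, ← hbij, hyi, one_mul]
    have hterm : ∀ b : Fin J.card, y (I.orderEmbOfFin hIJ b) * A (I.orderEmbOfFin hIJ b) j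
        = -(cvec A I J hIJ i b * A (I.orderEmbOfFin hIJ b) j) := by
      intro b
      rw [hyI b]; ring
    rw [Finset.sum_congr rfl fun b _ => hterm b, Finset.sum_neg_distrib]
    show xv A I J hIJ i j = _
    rw [xv, sub_eq_add_neg]

end Construction
end UJAux


/-- **Realizability of the generators `u_J`.** For a lattice `L ⊆ ℂ((t))^n` of rank `r`
with entropy vector `h`, and any proper subset `J ⊊ [n]` with `h_J ≠ ∞`, there is a
point `x ∈ L` whose coordinatewise valuation is the generator vector `u_J`: `x_j = 0`
for `j ∈ J`; for `j ∉ J` with `h_{J∪{j}} ≠ ∞`, `x_j ≠ 0` and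
`val(x_j) = h_{J∪{j}} − h_J`; and `x_j = 0` for `j ∉ J` with `h_{J∪{j}} = ∞`. -/
theorem exists_element_with_valuation_uJ
    {r n : ℕ} (hr : 1 ≤ r) (hrn : r ≤ n)
    (A : Matrix (Fin r) (Fin n) (LaurentSeries ℂ)) (hrank : A.rank = r)
    (J : Finset (Fin n)) (hJprop : J ≠ Finset.univ) (hJ : entropy A J ≠ ⊤) :
    ∃ x : Fin n → LaurentSeries ℂ, inRowSpan A x ∧
      (∀ j ∈ J, x j = 0) ∧
      (∀ j ∉ J, entropy A (insert j J) ≠ ⊤ →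
        x j ≠ 0 ∧ lval (x j) =
          ((WithTop.untopD 0 (entropy A (insert j J)) - WithTop.untopD 0 (entropy A J) : ℤ) : WithTop ℤ)) ∧
      (∀ j ∉ J, entropy A (insert j J) = ⊤ → x j = 0) := by
  classical
  obtain ⟨I, hIJ, hEnt⟩ := UJAux.entropy_attain A hJ
  have hd : (UJAux.mnr A I J hIJ).det ≠ 0 := by
    intro h
    exact hJ (by rw [hEnt, UJAux.lval_eq_top_iff.2 h])
  by_cases hcase : I = Finset.univ
  · refine ⟨0, ⟨0, fun i => by simp [UJAux.lval_zero], fun j => by simp⟩, ?_, ?_, ?_⟩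
    · intro j _; rfl
    · intro j hjJ hne
      exfalso
      apply hne
      refine le_antisymm le_top (Finset.le_inf fun I' _ => ?_)
      rw [dif_neg]
      have h1 : I'.card ≤ r := le_trans (Finset.card_le_univ I')
        (le_of_eq (Fintype.card_fin r))
      have h2 : (insert j J).card = r + 1 := by
        rw [Finset.card_insert_of_notMem hjJ, ← hIJ, hcase, Finset.card_univ,
          Fintype.card_fin]
      omega
    · intro j _ _; rfl
  · have hIler : I.card ≤ r := le_trans (Finset.card_le_univ I)
      (le_of_eq (Fintype.card_fin r))
    have hIlt : I.card < r := lt_of_le_of_ne hIler (fun h => hcase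
      (Finset.eq_univ_of_card I (by rw [h, Fintype.card_fin])))
    have hcompl : (Iᶜ : Finset (Fin r)).Nonempty := by
      rw [← Finset.card_pos, Finset.card_compl, Fintype.card_fin]
      omega
    have hmin : ∀ (I' : Finset (Fin r)) (h' : I'.card = J.card),
        lval (UJAux.mnr A I J hIJ).det ≤ lval (UJAux.mnr A I' J h').det := fun I' h' => by
      rw [← hEnt]; exact UJAux.entropy_le A h'
    have htop : lval (UJAux.mnr A I J hIJ).det ≠ ⊤ := fun h => hd (UJAux.lval_eq_top_iff.1 h)
    have hcins : ∀ {i : Fin r} {j : Fin n}, i ∉ I → j ∉ J →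
        (insert i I).card = (insert j J).card := fun hi hj => by
      rw [Finset.card_insert_of_notMem hi, Finset.card_insert_of_notMem hj, hIJ]
    have hkey : ∀ j ∉ J, entropy A (insert j J) =
        lval (UJAux.mnr A I J hIJ).det +
          (Iᶜ.inf fun i => lval (UJAux.xv A I J hIJ i j)) := by
      intro j hj
      refine le_antisymm ?_ ?_
      · obtain ⟨i0, hi0, hinf⟩ := Finset.exists_mem_eq_inf Iᶜ hcompl
          (fun i => lval (UJAux.xv A I J hIJ i j))
        have hi0I : i0 ∉ I := Finset.mem_compl.1 hi0
        rw [hinf, ← UJAux.lval_bordered hIJ hd hi0I hj (hcins hi0I hj)]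
        exact UJAux.entropy_le A _
      · refine Finset.le_inf fun I' _ => ?_
        by_cases h' : I'.card = (insert j J).card
        · rw [dif_pos h', UJAux.entmat_eq]
          exact UJAux.le_lval_minor hIJ hmin hd hj I' h'
        · rw [dif_neg h']; exact le_top
    have hzero : ∀ j ∉ J, entropy A (insert j J) = ⊤ →
        ∀ i ∈ Iᶜ, UJAux.xv A I J hIJ i j = 0 := by
      intro j hj htop' i hi
      have hiI := Finset.mem_compl.1 hi
      have h1 := UJAux.entropy_le A (hcins hiI hj)
      rw [htop'] at h1
      have h2 := top_le_iff.1 h1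
      rw [UJAux.lval_bordered hIJ hd hiI hj (hcins hiI hj)] at h2
      rcases WithTop.add_eq_top.1 h2 with h | h
      · exact absurd h htop
      · exact UJAux.lval_eq_top_iff.1 h
    set Jfin : Finset (Fin n) :=
      Finset.univ.filter (fun j => j ∉ J ∧ entropy A (insert j J) ≠ ⊤) with hJfin
    set m : Fin n → ℤ := fun j =>
      WithTop.untopD 0 (Iᶜ.inf fun i => lval (UJAux.xv A I J hIJ i j)) with hm
    have hminf : ∀ j ∈ Jfin,
        (Iᶜ.inf fun i => lval (UJAux.xv A I J hIJ i j)) = (m j : WithTop ℤ) := by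
      intro j hj
      obtain ⟨hjJ, hne⟩ := (Finset.mem_filter.1 hj).2
      have hne2 : (Iᶜ.inf fun i => lval (UJAux.xv A I J hIJ i j)) ≠ ⊤ := by
        intro hcon
        apply hne
        rw [hkey j hjJ, hcon, add_top]
      obtain ⟨z, hz⟩ := WithTop.ne_top_iff_exists.1 hne2
      have hmz : m j = z := by
        rw [hm]
        show WithTop.untopD 0 (Iᶜ.inf fun i => lval (UJAux.xv A I J hIJ i j)) = z
        rw [← hz, WithTop.untopD_coe]
      rw [hmz, hz]
    have hcnz : ∀ j ∈ Jfin, ∃ i ∈ Iᶜ, (UJAux.xv A I J hIJ i j).coeff (m j) ≠ 0 := by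
      intro j hj
      obtain ⟨i0, hi0, hinf⟩ := Finset.exists_mem_eq_inf Iᶜ hcompl
        (fun i => lval (UJAux.xv A I J hIJ i j))
      refine ⟨i0, hi0, ?_⟩
      have h1 : lval (UJAux.xv A I J hIJ i0 j) = (m j : WithTop ℤ) := by
        rw [← hinf]
        exact hminf j hj
      have hne0 : UJAux.xv A I J hIJ i0 j ≠ 0 := by
        intro hcon
        rw [hcon, UJAux.lval_zero] at h1
        exact absurd h1 (by simp)
      have horder : (UJAux.xv A I J hIJ i0 j).order = m j := by
        rw [UJAux.lval_of_ne hne0] at h1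
        exact_mod_cast h1
      rw [← horder]
      exact mt HahnSeries.coeff_order_eq_zero.1 hne0
    obtain ⟨lam, hlam⟩ := UJAux.generic Jfin Iᶜ
      (fun j i => (UJAux.xv A I J hIJ i j).coeff (m j)) hcnz
    refine ⟨fun j => ∑ i ∈ Iᶜ, lam i • UJAux.xv A I J hIJ i j, ?_, ?_, ?_, ?_⟩
    · -- membership in the row span
      have hy := fun (i : Fin r) (hi : i ∈ Iᶜ) =>
        UJAux.xv_inRowSpan hIJ hd hmin (Finset.mem_compl.1 hi)
      choose Y hY1 hY2 using hy
      refine ⟨fun i' => ∑ i ∈ Iᶜ.attach, HahnSeries.single 0 (lam i.1) * Y i.1 i.2 i',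
        ?_, ?_⟩
      · intro i'
        refine UJAux.le_lval_sum _ _ fun a _ => ?_
        rw [UJAux.lval_mul]
        exact add_nonneg (UJAux.zero_le_lval_single _) (hY1 a.1 a.2 i')
      · intro j
        have h1 : ∀ i : {z // z ∈ Iᶜ}, lam i.1 • UJAux.xv A I J hIJ i.1 j
            = ∑ i', (HahnSeries.single 0 (lam i.1) * Y i.1 i.2 i') * A i' j := by
          intro i
          rw [UJAux.smul_eq_single_mul, hY2 i.1 i.2 j, Finset.mul_sum]
          exact Finset.sum_congr rfl fun i' _ => (mul_assoc _ _ _).symm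
        calc ∑ i ∈ Iᶜ, lam i • UJAux.xv A I J hIJ i j
            = ∑ i ∈ Iᶜ.attach, lam i.1 • UJAux.xv A I J hIJ i.1 j :=
              (Finset.sum_attach _ _).symm
          _ = ∑ i ∈ Iᶜ.attach, ∑ i', (HahnSeries.single 0 (lam i.1) * Y i.1 i.2 i') * A i' j :=
              Finset.sum_congr rfl fun i _ => h1 i
          _ = ∑ i', ∑ i ∈ Iᶜ.attach, (HahnSeries.single 0 (lam i.1) * Y i.1 i.2 i') * A i' j :=
              Finset.sum_comm
          _ = ∑ i', (∑ i ∈ Iᶜ.attach, HahnSeries.single 0 (lam i.1) * Y i.1 i.2 i') * A i' j :=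
              Finset.sum_congr rfl fun i' _ => (Finset.sum_mul _ _ _).symm
    · intro j hj
      refine Finset.sum_eq_zero fun i _ => ?_
      rw [UJAux.xv_eq_zero_on hIJ hd i hj, smul_zero]
    · intro j hjJ hne
      have hjfin : j ∈ Jfin := Finset.mem_filter.2 ⟨Finset.mem_univ _, hjJ, hne⟩
      have hxcoeff : (∑ i ∈ Iᶜ, lam i • UJAux.xv A I J hIJ i j).coeff (m j)
          = ∑ i ∈ Iᶜ, lam i * (UJAux.xv A I J hIJ i j).coeff (m j) := by
        rw [UJAux.coeff_sum]
        exact Finset.sum_congr rfl fun i _ => by rw [HahnSeries.coeff_smul]; rfl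
      have hxne : (∑ i ∈ Iᶜ, lam i • UJAux.xv A I J hIJ i j).coeff (m j) ≠ 0 := by
        rw [hxcoeff]
        exact hlam j hjfin
      have hxn0 : (∑ i ∈ Iᶜ, lam i • UJAux.xv A I J hIJ i j) ≠ 0 := by
        intro hcon
        rw [hcon] at hxne
        simp at hxne
      have hge : (m j : WithTop ℤ) ≤ lval (∑ i ∈ Iᶜ, lam i • UJAux.xv A I J hIJ i j) := by
        refine UJAux.le_lval_sum _ _ fun i hi => ?_
        refine le_trans ?_ (UJAux.le_lval_smul _ _)
        rw [← hminf j hjfin]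
        exact Finset.inf_le hi
      have hlx : lval (∑ i ∈ Iᶜ, lam i • UJAux.xv A I J hIJ i j) = (m j : WithTop ℤ) :=
        le_antisymm (UJAux.lval_le_of_coeff_ne hxne) hge
      refine ⟨hxn0, ?_⟩
      rw [hlx]
      obtain ⟨dz, hdz⟩ := WithTop.ne_top_iff_exists.1 htop
      have h1 : entropy A (insert j J) = ((dz + m j : ℤ) : WithTop ℤ) := by
        rw [hkey j hjJ, ← hdz, hminf j hjfin]
        push_cast
        rfl
      have h2 : entropy A J = (dz : WithTop ℤ) := by rw [hEnt, ← hdz]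
      rw [h1, h2, WithTop.untopD_coe, WithTop.untopD_coe]
      have h3 : dz + m j - dz = m j := by ring
      rw [h3]
    · intro j hjJ htop'
      refine Finset.sum_eq_zero fun i hi => ?_
      rw [hzero j hjJ htop' i hi, smul_zero]


end
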